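/- arXiv:1404.5906 — 2 statements merged into one kernel-verified Lean document; each statement's English description precedes it below -/
import Mathlib

section
/- The one-step point-based value iteration error is bounded by the sampling density: if V_t is any value function, H̃ the point-based backup over a sampled belief set Σ̃, H the exact backup, and the α-functions all take values in [0,1], then ‖H̃[V_t] - H[V_t]‖_∞ ≤ δ(Σ̃), where δ(Σ̃) = sup_{σ∈Σ} inf_{σ̃∈Σ̃} ‖σ - σ̃‖₁ is the maximal L¹ distance from beliefs in Σ to their nearest sample. -/
/-!
Let `α⋆` attain the exact backup at `σ` and let `σ'` be a sample within `δ` of `σ`. The point-based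
backup lies between `⟨sel σ', σ⟩` and `⟨α⋆, σ⟩`, so the error is at most
`⟨α⋆ - sel σ', σ - σ'⟩ + (⟨α⋆, σ'⟩ - ⟨sel σ', σ'⟩)`. The second term is `≤ 0` because `sel σ'` is
optimal at `σ'`, and the first is `≤ ‖σ - σ'‖₁` because `α⋆ - sel σ'` takes values in `[-1, 1]`.
-/

open MeasureTheory

lemma abs_csSup_sub_le_of_mem_of_forall_le {T : Set ℝ} {a b : ℝ} (ha : a ∈ T)
    (hb : ∀ r ∈ T, r ≤ b) : |sSup T - b| ≤ b - a := by
  have hle : sSup T ≤ b := csSup_le ⟨a, ha⟩ hb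
  have hge : a ≤ sSup T := le_csSup ⟨b, hb⟩ ha
  rw [abs_sub_le_iff]
  constructor <;> linarith

section Pairing

variable {S : Type*} [MeasurableSpace S] {μ : Measure S}

lemma integral_mul_le_integral_abs {f g : S → ℝ} (hf : AEStronglyMeasurable f μ)
    (hf1 : ∀ᵐ s ∂μ, |f s| ≤ 1) (hg : Integrable g μ) :
    ∫ s, f s * g s ∂μ ≤ ∫ s, |g s| ∂μ := by
  refine integral_mono_ae (hg.bdd_mul hf hf1) hg.abs ?_
  filter_upwards [hf1] with s hs
  calc f s * g s ≤ |f s| * |g s| := by rw [← abs_mul]; exact le_abs_self _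
    _ ≤ |g s| := mul_le_of_le_one_left (abs_nonneg _) hs

lemma integrable_mul_of_mem_Icc {α σ : S → ℝ} (hα : AEStronglyMeasurable α μ)
    (hα01 : ∀ s, α s ∈ Set.Icc (0 : ℝ) 1) (hσ : Integrable σ μ) :
    Integrable (fun s => α s * σ s) μ :=
  hσ.bdd_mul hα (c := 1) <| .of_forall fun s => by
    rw [Real.norm_eq_abs, abs_le]
    exact ⟨by linarith [(hα01 s).1], (hα01 s).2⟩

lemma pairing_gap_sub_le_integral_abs_sub {α β σ τ : S → ℝ}
    (hα : AEStronglyMeasurable α μ) (hα01 : ∀ s, α s ∈ Set.Icc (0 : ℝ) 1)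
    (hβ : AEStronglyMeasurable β μ) (hβ01 : ∀ s, β s ∈ Set.Icc (0 : ℝ) 1)
    (hσ : Integrable σ μ) (hτ : Integrable τ μ) :
    ((∫ s, α s * σ s ∂μ) - ∫ s, β s * σ s ∂μ) - ((∫ s, α s * τ s ∂μ) - ∫ s, β s * τ s ∂μ)
      ≤ ∫ s, |σ s - τ s| ∂μ := by
  have hασ := integrable_mul_of_mem_Icc hα hα01 hσ
  have hβσ := integrable_mul_of_mem_Icc hβ hβ01 hσ
  have hατ := integrable_mul_of_mem_Icc hα hα01 hτ
  have hβτ := integrable_mul_of_mem_Icc hβ hβ01 hτ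
  have hαβ : ∀ s, |α s - β s| ≤ 1 := fun s => by
    rw [abs_le]
    constructor <;> linarith [(hα01 s).1, (hα01 s).2, (hβ01 s).1, (hβ01 s).2]
  calc ((∫ s, α s * σ s ∂μ) - ∫ s, β s * σ s ∂μ) - ((∫ s, α s * τ s ∂μ) - ∫ s, β s * τ s ∂μ)
      = ∫ s, (α s * σ s - β s * σ s) - (α s * τ s - β s * τ s) ∂μ := by
        rw [integral_sub, integral_sub hασ hβσ, integral_sub hατ hβτ]
        exacts [hασ.sub hβσ, hατ.sub hβτ]
    _ = ∫ s, (α s - β s) * (σ s - τ s) ∂μ := by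
        congr 1 with s
        ring
    _ ≤ ∫ s, |σ s - τ s| ∂μ :=
        integral_mul_le_integral_abs (hα.sub hβ) (.of_forall hαβ) (hσ.sub hτ)

end Pairing

theorem pbvi_one_step_error_general {S : Type*} [MeasurableSpace S] (μ : Measure S)
    (Sfull : Set (S → ℝ)) (Stil : Set (S → ℝ))
    (hsub : Stil ⊆ Sfull)
    (Γ : Set (S → ℝ))
    (hΓ : ∀ α ∈ Γ, Measurable α ∧ ∀ s, α s ∈ Set.Icc (0:ℝ) 1)
    (hσint : ∀ σ ∈ Sfull, Integrable σ μ)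
    (sel : (S → ℝ) → (S → ℝ))
    (hsel : ∀ σ' ∈ Stil, sel σ' ∈ Γ ∧
      ∀ α ∈ Γ, ∫ s, α s * σ' s ∂μ ≤ ∫ s, (sel σ') s * σ' s ∂μ)
    (hattain : ∀ σ ∈ Sfull, ∃ α ∈ Γ,
      ∀ α' ∈ Γ, ∫ s, α' s * σ s ∂μ ≤ ∫ s, α s * σ s ∂μ)
    (δ : ℝ)
    (hδ : ∀ σ ∈ Sfull, ∃ σ' ∈ Stil, ∫ s, |σ s - σ' s| ∂μ ≤ δ) :
    ∀ σ ∈ Sfull,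
      |sSup {r : ℝ | ∃ σ' ∈ Stil, r = ∫ s, (sel σ') s * σ s ∂μ} -
          sSup {r : ℝ | ∃ α ∈ Γ, r = ∫ s, α s * σ s ∂μ}| ≤ δ := by
  intro σ hσ
  obtain ⟨αopt, hαoptΓ, hαopt⟩ := hattain σ hσ
  obtain ⟨σ', hσ'Stil, hσ'δ⟩ := hδ σ hσ
  obtain ⟨hselΓ, hselopt⟩ := hsel σ' hσ'Stil
  have hexact : sSup {r : ℝ | ∃ α ∈ Γ, r = ∫ s, α s * σ s ∂μ} = ∫ s, αopt s * σ s ∂μ :=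
    IsGreatest.csSup_eq ⟨⟨αopt, hαoptΓ, rfl⟩, by rintro _ ⟨α, hα, rfl⟩; exact hαopt α hα⟩
  rw [hexact]
  refine le_trans
    (abs_csSup_sub_le_of_mem_of_forall_le (a := ∫ s, sel σ' s * σ s ∂μ) ?_ ?_) ?_
  · exact ⟨σ', hσ'Stil, rfl⟩
  · rintro _ ⟨τ, hτ, rfl⟩
    exact hαopt _ (hsel τ hτ).1
  · have hgap := pairing_gap_sub_le_integral_abs_sub
      (hΓ αopt hαoptΓ).1.aestronglyMeasurable (hΓ αopt hαoptΓ).2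
      (hΓ (sel σ') hselΓ).1.aestronglyMeasurable (hΓ (sel σ') hselΓ).2
      (hσint σ hσ) (hσint σ' (hsub hσ'Stil))
    linarith [hselopt αopt hαoptΓ]

/-- One-step point-based value iteration error bound: the gap between the exact
backup `H[V](σ) = sup_{α∈Γ} ⟨α,σ⟩` and the point-based backup (a supremum over the
α-functions `sel σ̃` that are maximal at the sampled beliefs `σ̃ ∈ Σ̃`) is bounded by
the sampling density `δ(Σ̃)`. -/
theorem pbvi_one_step_error {S : Type*} [MeasurableSpace S] (μ : Measure S)
    (Sfull : Set (S → ℝ)) (Stil : Set (S → ℝ))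
    (hsub : Stil ⊆ Sfull) (hfin : Stil.Finite) (hSne : Stil.Nonempty)
    (Γ : Set (S → ℝ)) (hΓne : Γ.Nonempty)
    (hΓ : ∀ α ∈ Γ, Measurable α ∧ ∀ s, α s ∈ Set.Icc (0:ℝ) 1)
    (hσint : ∀ σ ∈ Sfull, Integrable σ μ)
    (sel : (S → ℝ) → (S → ℝ))
    (hsel : ∀ σ' ∈ Stil, sel σ' ∈ Γ ∧
      ∀ α ∈ Γ, ∫ s, α s * σ' s ∂μ ≤ ∫ s, (sel σ') s * σ' s ∂μ)
    (hattain : ∀ σ ∈ Sfull, ∃ α ∈ Γ,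
      ∀ α' ∈ Γ, ∫ s, α' s * σ s ∂μ ≤ ∫ s, α s * σ s ∂μ)
    (δ : ℝ) (hδ0 : 0 ≤ δ)
    (hδ : ∀ σ ∈ Sfull, ∃ σ' ∈ Stil, ∫ s, |σ s - σ' s| ∂μ ≤ δ) :
    ∀ σ ∈ Sfull,
      |sSup {r : ℝ | ∃ σ' ∈ Stil, r = ∫ s, (sel σ') s * σ s ∂μ} -
          sSup {r : ℝ | ∃ α ∈ Γ, r = ∫ s, α s * σ s ∂μ}| ≤ δ :=
  pbvi_one_step_error_general μ Sfull Stil hsub Γ hΓ hσint sel hsel hattain δ hδ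
end

section
/- If α_{t+1}(x', q') is a finite Gaussian mixture in x' for each discrete mode q' (finitely many modes), and the backup integrand consists of: a mode-transition weight Q_{q',y}(u), an observation likelihood that is a finite Gaussian mixture in x', a continuous transition kernel φ(x'; Ax+f(q',u), W) with A invertible, a mixture approximation Σⱼ wⱼ φ(x; μⱼ, Σⱼ) for the discrete transition probability, and an indicator approximation that is a finite Gaussian mixture in x — then the backed-up function α_{y,u}(x,q) = Σ_{q'} Q_{q',y}(u) ∫ α_{t+1}(x',q') ψ(y|x',u) φ(x'; Ax+f, W) dx' · T_q-mixture(x) · 1_K-mixture(x) is again, for each q, a finite Gaussian mixture in x. -/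
open Real Matrix MeasureTheory

/-- Multivariate Gaussian density on ℝⁿ with mean `μ` and covariance `S`. -/
noncomputable def gaussN (n : ℕ) (μ : Fin n → ℝ) (S : Matrix (Fin n) (Fin n) ℝ)
    (x : Fin n → ℝ) : ℝ :=
  (2 * Real.pi) ^ (-(n:ℝ)/2) * S.det ^ (-(1:ℝ)/2) *
    Real.exp (-(1/2) * ((x - μ) ⬝ᵥ (S⁻¹ *ᵥ (x - μ))))

/-- A finite real linear combination of Gaussian densities on ℝⁿ (with positive
definite covariances). -/
def IsGaussMixture (n : ℕ) (g : (Fin n → ℝ) → ℝ) : Prop :=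
  ∃ (M : ℕ) (c : Fin M → ℝ) (m : Fin M → (Fin n → ℝ))
    (C : Fin M → Matrix (Fin n) (Fin n) ℝ),
    (∀ k, (C k).PosDef) ∧ ∀ x, g x = ∑ k, c k * gaussN n (m k) (C k) x

/-!
Finite Gaussian mixtures form a real vector space that is closed under pointwise products,
because completing the square writes the product of two Gaussians as a constant times a
Gaussian. Integrating a Gaussian `φ(x'; m, C)` against the kernel `φ(x'; Ax + b, W)` gives,
by the same identity, a constant times `exp (-½ (Ax + b - m)ᵀ (C + W)⁻¹ (Ax + b - m))`,
which is a Gaussian in `x` once `A` is invertible. The backed-up α-function is assembled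
from the data by exactly these operations.
-/

theorem exists_pos_mul_norm_sq_le_of_homogeneous {E : Type*} [NormedAddCommGroup E]
    [NormedSpace ℝ E] [FiniteDimensional ℝ E] {q : E → ℝ} (hq : Continuous q)
    (hsmul : ∀ (t : ℝ) v, q (t • v) = t ^ 2 * q v) (hpos : ∀ v ≠ 0, 0 < q v) :
    ∃ c > 0, ∀ v, c * ‖v‖ ^ 2 ≤ q v := by
  have hq0 : q 0 = 0 := by simpa using hsmul 0 0
  rcases subsingleton_or_nontrivial E with hE | hE
  · exact ⟨1, one_pos, fun v => by simp [Subsingleton.elim v 0, hq0]⟩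
  obtain ⟨u, hu, hmin⟩ := (isCompact_sphere (0 : E) 1).exists_isMinOn
    (NormedSpace.sphere_nonempty.mpr zero_le_one) hq.continuousOn
  have hu0 : u ≠ 0 := ne_zero_of_mem_unit_sphere ⟨u, hu⟩
  refine ⟨q u, hpos u hu0, fun v => ?_⟩
  rcases eq_or_ne v 0 with rfl | hv
  · simp [hq0]
  have hv' : 0 < ‖v‖ := norm_pos_iff.mpr hv
  have hunit : ‖v‖⁻¹ • v ∈ Metric.sphere (0 : E) 1 := by
    simp [norm_smul, hv'.ne']
  calc q u * ‖v‖ ^ 2 ≤ q (‖v‖⁻¹ • v) * ‖v‖ ^ 2 := by gcongr; exact hmin hunit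
    _ = q v := by rw [hsmul]; field_simp

theorem integrable_exp_neg_mul_sum_sq {ι : Type*} [Fintype ι] {b : ℝ} (hb : 0 < b) :
    Integrable (fun v : ι → ℝ => Real.exp (-b * ∑ i, v i ^ 2)) := by
  simp only [Finset.mul_sum, Real.exp_sum]
  exact Integrable.fintype_prod (f := fun _ t => Real.exp (-b * t ^ 2))
    fun _ => integrable_exp_neg_mul_sq hb

namespace Matrix

variable {ι : Type*} [Fintype ι]

theorem IsSymm.dotProduct_mulVec_comm {R : Type*} [CommSemiring R] {P : Matrix ι ι R}
    (hP : P.IsSymm) (x y : ι → R) : x ⬝ᵥ (P *ᵥ y) = y ⬝ᵥ (P *ᵥ x) := by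
  rw [dotProduct_mulVec, ← vecMul_transpose, hP.eq, dotProduct_comm]

omit [Fintype ι] in
theorem PosDef.isSymm {P : Matrix ι ι ℝ} (hP : P.PosDef) : P.IsSymm :=
  isHermitian_iff_isSymm.mp hP.isHermitian

theorem PosDef.exists_pos_mul_sum_sq_le {P : Matrix ι ι ℝ} (hP : P.PosDef) :
    ∃ c > 0, ∀ v : ι → ℝ, c * ∑ i, v i ^ 2 ≤ v ⬝ᵥ (P *ᵥ v) := by
  obtain ⟨c, hc, hle⟩ := exists_pos_mul_norm_sq_le_of_homogeneous
    (q := fun w : EuclideanSpace ℝ ι => w.ofLp ⬝ᵥ (P *ᵥ w.ofLp)) (by fun_prop)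
    (fun t v => by
      simp only [WithLp.ofLp_smul, mulVec_smul, dotProduct_smul, smul_dotProduct,
        smul_eq_mul]
      ring)
    (fun v hv => by simpa using hP.dotProduct_mulVec_pos (x := v.ofLp) (by simpa using hv))
  refine ⟨c, hc, fun v => ?_⟩
  simpa [EuclideanSpace.real_norm_sq_eq] using hle (WithLp.toLp 2 v)

variable [DecidableEq ι]

theorem inv_mul_inv_add_inv_inv_mul_inv {K : Type*} [Field K] {C₁ C₂ : Matrix ι ι K}
    (h₁ : IsUnit C₁.det) (h₂ : IsUnit C₂.det) :
    C₁⁻¹ * (C₁⁻¹ + C₂⁻¹)⁻¹ * C₂⁻¹ = (C₁ + C₂)⁻¹ := by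
  have hfactor : C₁⁻¹ + C₂⁻¹ = C₂⁻¹ * (C₁ + C₂) * C₁⁻¹ := by
    rw [Matrix.mul_add, Matrix.add_mul, Matrix.mul_assoc, mul_nonsing_inv _ h₁,
      Matrix.mul_one, nonsing_inv_mul _ h₂, Matrix.one_mul, add_comm]
  rw [hfactor, mul_inv_rev, mul_inv_rev, nonsing_inv_nonsing_inv _ h₁,
    nonsing_inv_nonsing_inv _ h₂, ← Matrix.mul_assoc, ← Matrix.mul_assoc,
    nonsing_inv_mul _ h₁, Matrix.one_mul, Matrix.mul_assoc, mul_nonsing_inv _ h₂,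
    Matrix.mul_one]

theorem add_quadForm_completeSquare {K : Type*} [Field K] {P₁ P₂ : Matrix ι ι K}
    (h₁ : P₁.IsSymm) (h₂ : P₂.IsSymm) (hP : IsUnit (P₁ + P₂).det) (μ₁ μ₂ x : ι → K) :
    (x - μ₁) ⬝ᵥ (P₁ *ᵥ (x - μ₁)) + (x - μ₂) ⬝ᵥ (P₂ *ᵥ (x - μ₂))
      = (x - (P₁ + P₂)⁻¹ *ᵥ (P₁ *ᵥ μ₁ + P₂ *ᵥ μ₂)) ⬝ᵥ
          ((P₁ + P₂) *ᵥ (x - (P₁ + P₂)⁻¹ *ᵥ (P₁ *ᵥ μ₁ + P₂ *ᵥ μ₂)))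
        + (μ₂ - μ₁) ⬝ᵥ ((P₁ * (P₁ + P₂)⁻¹ * P₂) *ᵥ (μ₂ - μ₁)) := by
  set ν := (P₁ + P₂)⁻¹ *ᵥ (P₁ *ᵥ μ₁ + P₂ *ᵥ μ₂)
  have hν : (P₁ + P₂) *ᵥ ν = P₁ *ᵥ μ₁ + P₂ *ᵥ μ₂ := by
    rw [mulVec_mulVec, mul_nonsing_inv _ hP, one_mulVec]
  set y := x - ν
  set u := μ₁ - ν
  set w := μ₂ - ν
  have hbal : P₁ *ᵥ u + P₂ *ᵥ w = 0 := by
    simp only [u, w, mulVec_sub]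
    rw [sub_add_sub_comm, ← add_mulVec, hν, sub_self]
  have hu : (P₁ + P₂)⁻¹ *ᵥ (P₂ *ᵥ (μ₂ - μ₁)) = -u := by
    have : (P₁ + P₂) *ᵥ (-u) = P₂ *ᵥ (μ₂ - μ₁) := by
      simp only [u, mulVec_neg, mulVec_sub, hν, add_mulVec]
      abel
    rw [← this, mulVec_mulVec, nonsing_inv_mul _ hP, one_mulVec]
  have hx₁ : x - μ₁ = y - u := by simp only [y, u]; abel
  have hx₂ : x - μ₂ = y - w := by simp only [y, w]; abel
  have hd : μ₂ - μ₁ = w - u := by simp only [u, w]; abel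
  have hR : (P₁ * (P₁ + P₂)⁻¹ * P₂) *ᵥ (μ₂ - μ₁) = -(P₁ *ᵥ u) := by
    rw [← mulVec_mulVec, ← mulVec_mulVec, hu, mulVec_neg]
  have hyb : y ⬝ᵥ (P₁ *ᵥ u) + y ⬝ᵥ (P₂ *ᵥ w) = 0 := by
    rw [← dotProduct_add, hbal, dotProduct_zero]
  have hwb : w ⬝ᵥ (P₁ *ᵥ u) + w ⬝ᵥ (P₂ *ᵥ w) = 0 := by
    rw [← dotProduct_add, hbal, dotProduct_zero]
  -- both sides reduce to `yᵀ (P₁ + P₂) y + uᵀ P₁ u + wᵀ P₂ w`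
  rw [hx₁, hx₂, hR, hd]
  simp only [mulVec_sub, add_mulVec, dotProduct_sub, sub_dotProduct, dotProduct_add,
    dotProduct_neg]
  linear_combination (-2 : K) * hyb + hwb + h₁.dotProduct_mulVec_comm y u
    + h₂.dotProduct_mulVec_comm y w

end Matrix

section GaussExp

variable {ι : Type*} [Fintype ι]

/-- Unnormalised Gaussian, parametrised by its precision (inverse covariance) matrix `P`. -/
noncomputable def gaussExp (μ : ι → ℝ) (P : Matrix ι ι ℝ) (x : ι → ℝ) : ℝ :=
  Real.exp (-(1 / 2) * ((x - μ) ⬝ᵥ (P *ᵥ (x - μ))))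

theorem continuous_gaussExp (μ : ι → ℝ) (P : Matrix ι ι ℝ) : Continuous (gaussExp μ P) := by
  unfold gaussExp; fun_prop

theorem gaussExp_eq_gaussExp_zero_sub (μ : ι → ℝ) (P : Matrix ι ι ℝ) (x : ι → ℝ) :
    gaussExp μ P x = gaussExp 0 P (x - μ) := by
  simp only [gaussExp, sub_zero]

theorem integrable_gaussExp {P : Matrix ι ι ℝ} (hP : P.PosDef) (μ : ι → ℝ) :
    Integrable (gaussExp μ P) := by
  obtain ⟨c, hc, hle⟩ := hP.exists_pos_mul_sum_sq_le
  refine ((integrable_exp_neg_mul_sum_sq (half_pos hc)).comp_sub_right μ).mono'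
    (continuous_gaussExp μ P).aestronglyMeasurable (ae_of_all _ fun x => ?_)
  rw [gaussExp, Real.norm_of_nonneg (Real.exp_pos _).le, Real.exp_le_exp]
  nlinarith [hle (x - μ)]

theorem integral_gaussExp_eq_integral_gaussExp_zero (μ : ι → ℝ) (P : Matrix ι ι ℝ) :
    ∫ x, gaussExp μ P x = ∫ x, gaussExp 0 P x := by
  simp_rw [gaussExp_eq_gaussExp_zero_sub μ]
  exact integral_sub_right_eq_self _ μ

variable [DecidableEq ι]

theorem gaussExp_comp_affine {A : Matrix ι ι ℝ} (hA : IsUnit A.det) (m : ι → ℝ)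
    (P : Matrix ι ι ℝ) (b x : ι → ℝ) :
    gaussExp m P (A *ᵥ x + b) = gaussExp (A⁻¹ *ᵥ (m - b)) (Aᵀ * P * A) x := by
  have hAx : A *ᵥ x + b - m = A *ᵥ (x - A⁻¹ *ᵥ (m - b)) := by
    rw [mulVec_sub, mulVec_mulVec, mul_nonsing_inv _ hA, one_mulVec]; abel
  rw [gaussExp, gaussExp, hAx, ← mulVec_mulVec, ← mulVec_mulVec, dotProduct_mulVec _ Aᵀ,
    vecMul_transpose]

theorem gaussExp_mul_gaussExp {P₁ P₂ : Matrix ι ι ℝ} (h₁ : P₁.IsSymm) (h₂ : P₂.IsSymm)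
    (hP : IsUnit (P₁ + P₂).det) (μ₁ μ₂ x : ι → ℝ) :
    gaussExp μ₁ P₁ x * gaussExp μ₂ P₂ x
      = gaussExp μ₁ (P₁ * (P₁ + P₂)⁻¹ * P₂) μ₂
        * gaussExp ((P₁ + P₂)⁻¹ *ᵥ (P₁ *ᵥ μ₁ + P₂ *ᵥ μ₂)) (P₁ + P₂) x := by
  simp only [gaussExp, ← Real.exp_add, ← mul_add, add_quadForm_completeSquare h₁ h₂ hP,
    add_comm]

theorem integral_gaussExp_mul_gaussExp {P₁ P₂ : Matrix ι ι ℝ} (h₁ : P₁.IsSymm)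
    (h₂ : P₂.IsSymm) (hP : IsUnit (P₁ + P₂).det) (μ₁ μ₂ : ι → ℝ) :
    ∫ x, gaussExp μ₁ P₁ x * gaussExp μ₂ P₂ x
      = (∫ x, gaussExp 0 (P₁ + P₂) x) * gaussExp μ₁ (P₁ * (P₁ + P₂)⁻¹ * P₂) μ₂ := by
  simp_rw [gaussExp_mul_gaussExp h₁ h₂ hP μ₁ μ₂]
  rw [integral_const_mul, integral_gaussExp_eq_integral_gaussExp_zero, mul_comm]

end GaussExp

section GaussMixture

variable {n : ℕ}

noncomputable def gaussNormConst (n : ℕ) (S : Matrix (Fin n) (Fin n) ℝ) : ℝ :=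
  (2 * π) ^ (-(n : ℝ) / 2) * S.det ^ (-(1 : ℝ) / 2)

theorem gaussN_eq_smul_gaussExp (μ : Fin n → ℝ) (S : Matrix (Fin n) (Fin n) ℝ) :
    gaussN n μ S = gaussNormConst n S • gaussExp μ S⁻¹ :=
  rfl

theorem gaussNormConst_pos {S : Matrix (Fin n) (Fin n) ℝ} (hS : S.PosDef) :
    0 < gaussNormConst n S := by
  have := hS.det_pos
  unfold gaussNormConst
  positivity

def gaussMixtures (n : ℕ) : Submodule ℝ ((Fin n → ℝ) → ℝ) :=
  Submodule.span ℝ {g | ∃ μ S, S.PosDef ∧ gaussN n μ S = g}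

theorem isGaussMixture_iff_mem_gaussMixtures {g : (Fin n → ℝ) → ℝ} :
    IsGaussMixture n g ↔ g ∈ gaussMixtures n := by
  rw [gaussMixtures, Submodule.mem_span_set']
  constructor
  · rintro ⟨M, c, m, C, hC, hg⟩
    exact ⟨M, c, fun k => ⟨gaussN n (m k) (C k), m k, C k, hC k, rfl⟩,
      funext fun x => by simp [hg, Finset.sum_apply]⟩
  · rintro ⟨M, c, v, rfl⟩
    choose m C hC hv using fun k => (v k).2
    exact ⟨M, c, m, C, hC, fun x => by simp [← hv, Finset.sum_apply]⟩

theorem gaussN_mem_gaussMixtures {S : Matrix (Fin n) (Fin n) ℝ} (hS : S.PosDef)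
    (μ : Fin n → ℝ) : gaussN n μ S ∈ gaussMixtures n :=
  Submodule.subset_span ⟨μ, S, hS, rfl⟩

theorem gaussExp_mem_gaussMixtures {P : Matrix (Fin n) (Fin n) ℝ} (hP : P.PosDef)
    (μ : Fin n → ℝ) : gaussExp μ P ∈ gaussMixtures n := by
  have hP' : P⁻¹⁻¹ = P := nonsing_inv_nonsing_inv _ hP.det_pos.ne'.isUnit
  have h : gaussExp μ P = (gaussNormConst n P⁻¹)⁻¹ • gaussN n μ P⁻¹ := by
    rw [gaussN_eq_smul_gaussExp, hP', smul_smul,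
      inv_mul_cancel₀ (gaussNormConst_pos hP.inv).ne', one_smul]
  rw [h]
  exact Submodule.smul_mem _ _ (gaussN_mem_gaussMixtures hP.inv μ)

theorem gaussN_mul_gaussN_mem_gaussMixtures {C₁ C₂ : Matrix (Fin n) (Fin n) ℝ}
    (h₁ : C₁.PosDef) (h₂ : C₂.PosDef) (μ₁ μ₂ : Fin n → ℝ) :
    gaussN n μ₁ C₁ * gaussN n μ₂ C₂ ∈ gaussMixtures n := by
  have hP : (C₁⁻¹ + C₂⁻¹).PosDef := h₁.inv.add h₂.inv
  rw [gaussN_eq_smul_gaussExp, gaussN_eq_smul_gaussExp, smul_mul_smul_comm,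
    show gaussExp μ₁ C₁⁻¹ * gaussExp μ₂ C₂⁻¹ = _ from
      funext (gaussExp_mul_gaussExp h₁.inv.isSymm h₂.inv.isSymm hP.det_pos.ne'.isUnit μ₁ μ₂)]
  exact Submodule.smul_mem _ _ (Submodule.smul_mem _ _ (gaussExp_mem_gaussMixtures hP _))

theorem mul_mem_gaussMixtures {g h : (Fin n → ℝ) → ℝ} (hg : g ∈ gaussMixtures n)
    (hh : h ∈ gaussMixtures n) : g * h ∈ gaussMixtures n := by
  have hclosed : gaussMixtures n * gaussMixtures n ≤ gaussMixtures n := by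
    rw [gaussMixtures, Submodule.span_mul_span]
    refine Submodule.span_le.mpr ?_
    rintro _ ⟨_, ⟨μ₁, C₁, h₁, rfl⟩, _, ⟨μ₂, C₂, h₂, rfl⟩, rfl⟩
    exact gaussN_mul_gaussN_mem_gaussMixtures h₁ h₂ μ₁ μ₂
  exact hclosed (Submodule.mul_mem_mul hg hh)

theorem integrable_of_mem_gaussMixtures {g : (Fin n → ℝ) → ℝ} (hg : g ∈ gaussMixtures n) :
    Integrable g := by
  induction hg using Submodule.span_induction with
  | mem g hg =>
    obtain ⟨μ, S, hS, rfl⟩ := hg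
    rw [gaussN_eq_smul_gaussExp]
    exact (integrable_gaussExp hS.inv μ).smul _
  | zero => exact integrable_zero _ _ _
  | add g h _ _ hg hh => exact hg.add hh
  | smul c g _ hg => exact hg.smul c

variable {A W : Matrix (Fin n) (Fin n) ℝ}

theorem integral_gaussN_mul_gaussN_comp_affine_mem_gaussMixtures (hA : IsUnit A.det)
    (hW : W.PosDef) (b : Fin n → ℝ) {C : Matrix (Fin n) (Fin n) ℝ} (hC : C.PosDef)
    (m : Fin n → ℝ) :
    (fun x => ∫ x', gaussN n m C x' * gaussN n (A *ᵥ x + b) W x') ∈ gaussMixtures n := by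
  have hR : C⁻¹ * (C⁻¹ + W⁻¹)⁻¹ * W⁻¹ = (C + W)⁻¹ :=
    inv_mul_inv_add_inv_inv_mul_inv hC.det_pos.ne'.isUnit hW.det_pos.ne'.isUnit
  have hB : (Aᵀ * (C + W)⁻¹ * A).PosDef := by
    simpa using (hC.add hW).inv.conjTranspose_mul_mul_same
      (mulVec_injective_of_isUnit ((isUnit_iff_isUnit_det A).mpr hA))
  have hformula : (fun x => ∫ x', gaussN n m C x' * gaussN n (A *ᵥ x + b) W x')
      = (gaussNormConst n C * gaussNormConst n W * ∫ x', gaussExp 0 (C⁻¹ + W⁻¹) x') •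
          gaussExp (A⁻¹ *ᵥ (m - b)) (Aᵀ * (C + W)⁻¹ * A) := by
    ext x
    simp only [gaussN_eq_smul_gaussExp, Pi.smul_apply, smul_eq_mul, mul_mul_mul_comm,
      integral_const_mul]
    rw [integral_gaussExp_mul_gaussExp hC.inv.isSymm hW.inv.isSymm
      (hC.inv.add hW.inv).det_pos.ne'.isUnit, hR, gaussExp_comp_affine hA]
    ring
  rw [hformula]
  exact Submodule.smul_mem _ _ (gaussExp_mem_gaussMixtures hB _)

theorem integral_mul_gaussN_comp_affine_mem_gaussMixtures (hA : IsUnit A.det)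
    (hW : W.PosDef) (b : Fin n → ℝ) {G : (Fin n → ℝ) → ℝ} (hG : G ∈ gaussMixtures n) :
    (fun x => ∫ x', G x' * gaussN n (A *ᵥ x + b) W x') ∈ gaussMixtures n := by
  induction hG using Submodule.span_induction with
  | mem G hG =>
    obtain ⟨m, C, hC, rfl⟩ := hG
    exact integral_gaussN_mul_gaussN_comp_affine_mem_gaussMixtures hA hW b hC m
  | zero =>
    simp only [Pi.zero_apply, zero_mul, integral_zero]
    exact (gaussMixtures n).zero_mem
  | add G H hG hH ihG ihH =>
    have hintegrable : ∀ {F : (Fin n → ℝ) → ℝ}, F ∈ gaussMixtures n → ∀ x,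
        Integrable fun x' => F x' * gaussN n (A *ᵥ x + b) W x' := fun hF _ =>
      integrable_of_mem_gaussMixtures
        (mul_mem_gaussMixtures hF (gaussN_mem_gaussMixtures hW _))
    convert (gaussMixtures n).add_mem ihG ihH using 1
    ext x
    simp only [Pi.add_apply, add_mul]
    exact integral_add (hintegrable hG x) (hintegrable hH x)
  | smul c G _ ihG =>
    simp only [Pi.smul_apply, smul_mul_assoc, integral_smul]
    exact (gaussMixtures n).smul_mem c ihG

end GaussMixture

/-- Closedness of the α-function backup under Gaussian mixtures: if the
next-stage α-functions, the observation likelihood, the discrete-transition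
mixture approximation, and the indicator approximation are all finite Gaussian
mixtures, and the continuous transition kernel is `φ(x'; Ax + f(q'), W)` with `A`
invertible and `W` positive definite, then for each mode `q` the backed-up
function `α_{y,u}(x,q)` is again a finite Gaussian mixture in `x`. -/
theorem alpha_backup_gauss_mixture_closed
    (n : ℕ) {Q : Type*} [Fintype Q]
    (A : Matrix (Fin n) (Fin n) ℝ) (hA : IsUnit A.det)
    (f : Q → (Fin n → ℝ)) (W : Matrix (Fin n) (Fin n) ℝ) (hW : W.PosDef)
    (Qw : Q → ℝ)
    (αnext : Q → (Fin n → ℝ) → ℝ) (hα : ∀ q', IsGaussMixture n (αnext q'))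
    (ψ : (Fin n → ℝ) → ℝ) (hψ : IsGaussMixture n ψ)
    (Tmix : Q → Q → (Fin n → ℝ) → ℝ) (hT : ∀ q' q, IsGaussMixture n (Tmix q' q))
    (Ind : (Fin n → ℝ) → ℝ) (hInd : IsGaussMixture n Ind) :
    ∀ q : Q, IsGaussMixture n (fun x =>
      (∑ q' : Q, Qw q' *
          (∫ x' : Fin n → ℝ, αnext q' x' * ψ x' * gaussN n (A *ᵥ x + f q') W x') *
          Tmix q' q x) * Ind x) := by
  simp only [isGaussMixture_iff_mem_gaussMixtures] at hα hψ hT hInd ⊢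
  intro q
  have hbackup : ∀ q', (fun x => ∫ x', αnext q' x' * ψ x' * gaussN n (A *ᵥ x + f q') W x')
      ∈ gaussMixtures n := fun q' =>
    integral_mul_gaussN_comp_affine_mem_gaussMixtures hA hW (f q')
      (mul_mem_gaussMixtures (hα q') hψ)
  refine mul_mem_gaussMixtures ?_ hInd
  convert (gaussMixtures n).sum_mem (t := Finset.univ) fun q' _ =>
    (gaussMixtures n).smul_mem (Qw q') (mul_mem_gaussMixtures (hbackup q') (hT q' q)) using 1
  ext x
  simp [Finset.sum_apply, mul_assoc]
end
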